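/- The stabilizers S₃, S₄, S₅, S₆ correct any single bit error: (i) for every a ∈ {1,2}, j ∈ Fin 7, and logical codeword |ψ⟩ ∈ {|0_L⟩,|1_L⟩,|2_L⟩}, the corrupted state X_a^(j)|ψ⟩ is an eigenvector of each of S₃, S₄, S₅, S₆ with eigenvalue a cube root of unity; and (ii) the syndrome map sending each of the 14 single bit errors X_a^(j) (a ∈ {1,2}, j ∈ Fin 7) to its 4-tuple of eigenvalues (λ₃, λ₄, λ₅, λ₆) is injective, so distinct single bit errors produce distinct syndromes. -/

import Mathlib

open Complex Matrix

noncomputable section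

/-- ω = exp(2πi/3), a primitive cube root of unity. -/
def ω : ℂ := Complex.exp (2 * (Real.pi : ℂ) * Complex.I / 3)

/-- The ternary cyclic shift matrix: X₁ e_j = e_{(j+1) mod 3}. -/
def X1 : Matrix (Fin 3) (Fin 3) ℂ := Matrix.of fun i j => if i = j + 1 then (1 : ℂ) else 0

/-- The ternary phase matrix Z₁ = diag(1, ω, ω²). -/
def Z1 : Matrix (Fin 3) (Fin 3) ℂ := Matrix.diagonal ![1, ω, ω ^ 2]

/-- X₂ = X₁·X₁. -/
def X2 : Matrix (Fin 3) (Fin 3) ℂ := X1 * X1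

/-- Z₂ = Z₁·Z₁. -/
def Z2 : Matrix (Fin 3) (Fin 3) ℂ := Z1 * Z1

/-- The 7-qutrit state space. -/
abbrev V : Type := (Fin 7 → Fin 3) → ℂ

/-- Standard basis vector of the 7-qutrit state space indexed by a ternary string. -/
def e (s : Fin 7 → Fin 3) : V := fun t => if t = s then 1 else 0

/-- Action on the 7-qutrit space of a tensor product M₀ ⊗ M₁ ⊗ … ⊗ M₆ of 3×3 matrices. -/
def act (M : Fin 7 → Matrix (Fin 3) (Fin 3) ℂ) (v : V) : V :=
  fun s => ∑ t : Fin 7 → Fin 3, (∏ j : Fin 7, M j (s j) (t j)) * v t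

/-- `applyAt M j` applies the single-qutrit operator `M` at position `j` (identity elsewhere). -/
def applyAt (M : Matrix (Fin 3) (Fin 3) ℂ) (j : Fin 7) : V → V :=
  act (fun k => if k = j then M else 1)

/-- The unnormalized logical codeword |0_L⟩. -/
def c0 : V :=
  e ![0,0,0,0,0,0,0] + e ![1,0,2,0,1,0,2] + e ![2,0,1,0,2,0,1]
    + e ![0,1,0,2,0,1,0] + e ![1,1,2,2,1,1,2] + e ![2,1,1,2,2,1,1]
    + e ![0,2,0,1,0,2,0] + e ![1,2,2,1,1,2,2] + e ![2,2,1,1,2,2,1]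

/-- The unnormalized logical codeword |1_L⟩. -/
def c1 : V :=
  e ![1,1,1,1,1,1,1] + e ![2,1,0,1,2,1,0] + e ![0,1,2,1,0,1,2]
    + e ![1,2,1,0,1,2,1] + e ![2,2,0,0,2,2,0] + e ![0,2,2,0,0,2,2]
    + e ![1,0,1,2,1,0,1] + e ![2,0,0,2,2,0,0] + e ![0,0,2,2,0,0,2]

/-- The unnormalized logical codeword |2_L⟩. -/
def c2 : V :=
  e ![2,2,2,2,2,2,2] + e ![0,2,1,2,0,2,1] + e ![1,2,0,2,1,2,0]
    + e ![2,0,2,1,2,0,2] + e ![0,0,1,1,0,0,1] + e ![1,0,0,1,1,0,0]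
    + e ![2,1,2,0,2,1,2] + e ![0,1,1,0,0,1,1] + e ![1,1,0,0,1,1,0]

/-- The three logical codewords. -/
def cw : Fin 3 → V := ![c0, c1, c2]

/-- Phase-error stabilizer S₁ = X₁⊗I⊗X₂⊗I⊗X₁⊗I⊗X₂. -/
def S1 : V → V := act ![X1, 1, X2, 1, X1, 1, X2]

/-- Phase-error stabilizer S₂ = I⊗X₁⊗I⊗X₂⊗I⊗X₁⊗I. -/
def S2 : V → V := act ![1, X1, 1, X2, 1, X1, 1]

/-- Bit-error stabilizer S₃ = Z₁⊗Z₂⊗Z₁⊗Z₂⊗I⊗I⊗I. -/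
def S3 : V → V := act ![Z1, Z2, Z1, Z2, 1, 1, 1]

/-- Bit-error stabilizer S₄ = I⊗I⊗I⊗Z₁⊗Z₂⊗Z₁⊗Z₂. -/
def S4 : V → V := act ![1, 1, 1, Z1, Z2, Z1, Z2]

/-- Bit-error stabilizer S₅ = I⊗Z₁⊗Z₂⊗Z₁⊗Z₂⊗I⊗I. -/
def S5 : V → V := act ![1, Z1, Z2, Z1, Z2, 1, 1]

/-- Bit-error stabilizer S₆ = I⊗I⊗Z₁⊗Z₂⊗Z₁⊗Z₂⊗I. -/
def S6 : V → V := act ![1, 1, Z1, Z2, Z1, Z2, 1]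

/-- XP 0 = X₁, XP 1 = X₂ : the two ternary bit-error operators indexed by {1,2}. -/
def XP : Fin 2 → Matrix (Fin 3) (Fin 3) ℂ := ![X1, X2]

/-!
The stabilizers S₃, …, S₆ are tensor products of powers of Z₁ = diag(ω^v), so they are diagonal
in the computational basis: the one with exponent row w ∈ 𝔽₃⁷ multiplies e_t by ω^(w ⬝ t).
Stacking the four exponent rows gives a parity-check matrix H over 𝔽₃, and every basis string
occurring in the three codewords lies in ker H. The error X_δ^(j) translates every string by
δ e_j, so the corrupted codeword is supported on strings of syndrome H t = δ H_j; hence it is an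
eigenvector of the m-th stabilizer with eigenvalue ω^(δ H_mj), a cube root of unity. Since the
fourteen vectors δ H_j (δ ∈ {1, 2}, j ∈ Fin 7) are pairwise distinct and t ↦ ω^t is injective on
𝔽₃, the syndrome determines the error.
-/

theorem AddChar.map_sum_eq_prod {ι A M : Type*} [AddCommMonoid A] [CommMonoid M]
    (ψ : AddChar A M) (s : Finset ι) (f : ι → A) : ψ (∑ i ∈ s, f i) = ∏ i ∈ s, ψ (f i) := by
  induction s using Finset.cons_induction with
  | empty => simp
  | cons a s ha ih => rw [Finset.sum_cons, Finset.prod_cons, AddChar.map_add_eq_mul, ih]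

theorem isPrimitiveRoot_omega : IsPrimitiveRoot ω 3 := by
  simpa [ω] using Complex.isPrimitiveRoot_exp 3 three_ne_zero

def omegaChar : AddChar (Fin 3) ℂ where
  toFun v := ω ^ (v : ℕ)
  map_zero_eq_one' := pow_zero ω
  map_add_eq_mul' a b := by
    rw [Fin.val_add, ← pow_eq_pow_mod _ isPrimitiveRoot_omega.pow_eq_one, pow_add]

theorem omegaChar_apply (v : Fin 3) : omegaChar v = ω ^ (v : ℕ) := rfl

theorem omegaChar_injective : Function.Injective omegaChar := fun a b h =>
  Fin.ext (isPrimitiveRoot_omega.pow_inj a.isLt b.isLt h)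

theorem omegaChar_pow_three (x : Fin 3) : omegaChar x ^ 3 = 1 := by
  rw [← AddChar.map_nsmul_eq_pow, show 3 • x = 0 by revert x; decide, AddChar.map_zero_eq_one]

def phase (a : Fin 3) : Matrix (Fin 3) (Fin 3) ℂ :=
  diagonal fun v => omegaChar (a * v)

def shift (δ : Fin 3) : Matrix (Fin 3) (Fin 3) ℂ :=
  of fun u v => if u = v + δ then 1 else 0

theorem phase_mul_phase (a b : Fin 3) : phase a * phase b = phase (a + b) := by
  simp only [phase, diagonal_mul_diagonal, ← AddChar.map_add_eq_mul, add_mul]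

theorem shift_mul_shift (δ ε : Fin 3) : shift δ * shift ε = shift (δ + ε) := by
  ext u v
  simp [shift, mul_apply, add_assoc, add_comm ε δ]

theorem phase_zero : phase 0 = 1 := by
  simp [phase]

theorem shift_zero : shift 0 = 1 := by
  ext u v
  simp [shift, one_apply]

theorem Z1_eq_phase : Z1 = phase 1 := by
  rw [Z1, phase]
  congr 1
  funext v
  fin_cases v <;> simp [omegaChar_apply]

theorem act_diagonal_apply (d : Fin 7 → Fin 3 → ℂ) (v : V) (t : Fin 7 → Fin 3) :
    act (fun k => diagonal (d k)) v t = (∏ k, d k (t k)) * v t := by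
  simp only [act, diagonal_apply, Fintype.prod_ite_zero, ← funext_iff, ite_mul, zero_mul]
  simp

theorem act_shift_apply (δ : Fin 7 → Fin 3) (v : V) (t : Fin 7 → Fin 3) :
    act (fun k => shift (δ k)) v t = v (t - δ) := by
  simp only [act, shift, of_apply, Fintype.prod_boole, ite_mul, one_mul, zero_mul]
  convert Fintype.sum_ite_eq' (t - δ) v using 3
  simp only [funext_iff, Pi.sub_apply]
  exact forall_congr' fun k => by rw [eq_sub_iff_add_eq, eq_comm]

theorem act_phase_apply (w : Fin 7 → Fin 3) (v : V) (t : Fin 7 → Fin 3) :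
    act (fun k => phase (w k)) v t = omegaChar (w ⬝ᵥ t) * v t := by
  simp only [phase, act_diagonal_apply, dotProduct, AddChar.map_sum_eq_prod]

theorem applyAt_shift_apply (δ : Fin 3) (j : Fin 7) (v : V) (t : Fin 7 → Fin 3) :
    applyAt (shift δ) j v t = v (t - Pi.single j δ) := by
  have hfactors : (fun k => if k = j then shift δ else 1)
      = fun k => shift ((Pi.single j δ : Fin 7 → Fin 3) k) := by
    funext k
    rcases eq_or_ne k j with rfl | hk
    · simp
    · simp [hk, shift_zero]
  rw [applyAt, hfactors, act_shift_apply]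

-- Row m lists the exponents of Z₁ in the m-th of S₃, S₄, S₅, S₆.
def checkMatrix : Matrix (Fin 4) (Fin 7) (Fin 3) :=
  !![1, 2, 1, 2, 0, 0, 0;
     0, 0, 0, 1, 2, 1, 2;
     0, 1, 2, 1, 2, 0, 0;
     0, 0, 1, 2, 1, 2, 0]

def stabilizer (m : Fin 4) : V → V := act fun k => phase (checkMatrix m k)

theorem stabilizer_eq : ![S3, S4, S5, S6] = stabilizer := by
  have hZ2 : Z2 = phase 2 := by rw [Z2, Z1_eq_phase, phase_mul_phase]; rfl
  funext m
  fin_cases m <;>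
  · simp only [stabilizer, S3, S4, S5, S6, Z1_eq_phase, hZ2, ← phase_zero]
    rfl

theorem XP_eq_shift (a : Fin 2) : XP a = shift a.succ := by
  fin_cases a
  · rfl
  · exact shift_mul_shift 1 1

theorem checkMatrix_mulVec_of_cw_ne_zero (i : Fin 3) (t : Fin 7 → Fin 3) (ht : cw i t ≠ 0) :
    checkMatrix *ᵥ t = 0 := by
  contrapose! ht
  have hne : ∀ s, checkMatrix *ᵥ s = 0 → e s t = 0 := fun s hs =>
    if_neg (by rintro rfl; exact ht hs)
  fin_cases i <;> simp (disch := decide) [cw, c0, c1, c2, hne]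

theorem cw_zero_apply_zero : cw 0 0 = 1 := by
  simp +decide [cw, c0, e]

theorem act_phase_eq_smul (w : Fin 7 → Fin 3) (c : Fin 3) (v : V)
    (hv : ∀ t, v t ≠ 0 → w ⬝ᵥ t = c) : act (fun k => phase (w k)) v = omegaChar c • v := by
  funext t
  rw [act_phase_apply, Pi.smul_apply, smul_eq_mul]
  by_cases h : v t = 0
  · rw [h, mul_zero, mul_zero]
  · rw [hv t h]

theorem checkMatrix_mulVec_of_corrupted_ne_zero (a : Fin 2) (j : Fin 7) (i : Fin 3)
    (t : Fin 7 → Fin 3) (ht : applyAt (XP a) j (cw i) t ≠ 0) :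
    checkMatrix *ᵥ t = checkMatrix *ᵥ Pi.single j a.succ := by
  rw [XP_eq_shift, applyAt_shift_apply] at ht
  rw [← sub_eq_zero, ← mulVec_sub]
  exact checkMatrix_mulVec_of_cw_ne_zero i _ ht

theorem stabilizer_corrupted (m : Fin 4) (a : Fin 2) (j : Fin 7) (i : Fin 3) :
    stabilizer m (applyAt (XP a) j (cw i))
      = omegaChar (checkMatrix m j * a.succ) • applyAt (XP a) j (cw i) := by
  refine act_phase_eq_smul _ _ _ fun t ht => ?_
  exact (congrFun (checkMatrix_mulVec_of_corrupted_ne_zero a j i t ht) m).trans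
    (dotProduct_single _ _ _)

theorem corrupted_cw_zero_ne_zero (a : Fin 2) (j : Fin 7) : applyAt (XP a) j (cw 0) ≠ 0 := by
  intro h
  have h0 := congrFun h (Pi.single j a.succ)
  rw [XP_eq_shift, applyAt_shift_apply, sub_self, cw_zero_apply_zero] at h0
  exact one_ne_zero h0

theorem eq_omegaChar_of_stabilizer_corrupted (m : Fin 4) (a : Fin 2) (j : Fin 7) (l : ℂ)
    (h : stabilizer m (applyAt (XP a) j (cw 0)) = l • applyAt (XP a) j (cw 0)) :
    l = omegaChar (checkMatrix m j * a.succ) :=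
  smul_left_injective ℂ (corrupted_cw_zero_ne_zero a j)
    (h.symm.trans (stabilizer_corrupted m a j 0))

theorem checkMatrix_col_eq_of_eigenvalue_eq (m : Fin 4) (a a' : Fin 2) (j j' : Fin 7) (l : ℂ)
    (h : stabilizer m (applyAt (XP a) j (cw 0)) = l • applyAt (XP a) j (cw 0))
    (h' : stabilizer m (applyAt (XP a') j' (cw 0)) = l • applyAt (XP a') j' (cw 0)) :
    checkMatrix m j * a.succ = checkMatrix m j' * a'.succ :=
  omegaChar_injective ((eq_omegaChar_of_stabilizer_corrupted m a j l h).symm.trans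
    (eq_omegaChar_of_stabilizer_corrupted m a' j' l h'))

theorem checkMatrix_scaled_cols_injective (a a' : Fin 2) (j j' : Fin 7)
    (h : ∀ m, checkMatrix m j * a.succ = checkMatrix m j' * a'.succ) : a = a' ∧ j = j' := by
  revert a a' j j'
  decide

/-- The stabilizers S₃,…,S₆ correct any single bit error: (i) every corrupted codeword
X_a^(j)|ψ⟩ is an eigenvector of each of S₃,…,S₆ with eigenvalue a cube root of unity;
(ii) the syndrome map of the 14 single bit errors is injective. -/
theorem single_bit_error_correction :
    (∀ a : Fin 2, ∀ j : Fin 7, ∀ i : Fin 3,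
      ∃ l3 l4 l5 l6 : ℂ, l3 ^ 3 = 1 ∧ l4 ^ 3 = 1 ∧ l5 ^ 3 = 1 ∧ l6 ^ 3 = 1 ∧
        S3 (applyAt (XP a) j (cw i)) = l3 • applyAt (XP a) j (cw i) ∧
        S4 (applyAt (XP a) j (cw i)) = l4 • applyAt (XP a) j (cw i) ∧
        S5 (applyAt (XP a) j (cw i)) = l5 • applyAt (XP a) j (cw i) ∧
        S6 (applyAt (XP a) j (cw i)) = l6 • applyAt (XP a) j (cw i)) ∧
    (∀ a a' : Fin 2, ∀ j j' : Fin 7, ∀ l3 l4 l5 l6 : ℂ,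
      (∀ i : Fin 3,
        S3 (applyAt (XP a) j (cw i)) = l3 • applyAt (XP a) j (cw i) ∧
        S4 (applyAt (XP a) j (cw i)) = l4 • applyAt (XP a) j (cw i) ∧
        S5 (applyAt (XP a) j (cw i)) = l5 • applyAt (XP a) j (cw i) ∧
        S6 (applyAt (XP a) j (cw i)) = l6 • applyAt (XP a) j (cw i)) →
      (∀ i : Fin 3,
        S3 (applyAt (XP a') j' (cw i)) = l3 • applyAt (XP a') j' (cw i) ∧
        S4 (applyAt (XP a') j' (cw i)) = l4 • applyAt (XP a') j' (cw i) ∧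
        S5 (applyAt (XP a') j' (cw i)) = l5 • applyAt (XP a') j' (cw i) ∧
        S6 (applyAt (XP a') j' (cw i)) = l6 • applyAt (XP a') j' (cw i)) →
      a = a' ∧ j = j') := by
  obtain ⟨h3, h4, h5, h6⟩ :
      S3 = stabilizer 0 ∧ S4 = stabilizer 1 ∧ S5 = stabilizer 2 ∧ S6 = stabilizer 3 :=
    ⟨congrFun stabilizer_eq 0, congrFun stabilizer_eq 1, congrFun stabilizer_eq 2,
      congrFun stabilizer_eq 3⟩
  rw [h3, h4, h5, h6]
  refine ⟨fun a j i => ⟨_, _, _, _, omegaChar_pow_three _, omegaChar_pow_three _,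
    omegaChar_pow_three _, omegaChar_pow_three _, stabilizer_corrupted 0 a j i,
    stabilizer_corrupted 1 a j i, stabilizer_corrupted 2 a j i, stabilizer_corrupted 3 a j i⟩, ?_⟩
  intro a a' j j' l3 l4 l5 l6 h h'
  obtain ⟨e3, e4, e5, e6⟩ := h 0
  obtain ⟨f3, f4, f5, f6⟩ := h' 0
  refine checkMatrix_scaled_cols_injective a a' j j' fun m => ?_
  fin_cases m
  exacts [checkMatrix_col_eq_of_eigenvalue_eq _ _ _ _ _ _ e3 f3,
    checkMatrix_col_eq_of_eigenvalue_eq _ _ _ _ _ _ e4 f4,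
    checkMatrix_col_eq_of_eigenvalue_eq _ _ _ _ _ _ e5 f5,
    checkMatrix_col_eq_of_eigenvalue_eq _ _ _ _ _ _ e6 f6]
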